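/- arXiv:2011.08950 — 7 statements merged into one kernel-verified Lean document; each statement's English description precedes it below -/
import Mathlib

section
/- Let X be a topological space, let α : X → X be an aperiodic Borel measurable bijection with Borel measurable inverse, let F be a Banach function space on X satisfying condition Ω_α, and let w and 1/w both be weights on X. If the set 𝒫((C^{(n)}_{α,w})_{n∈ℕ₀}) of periodic elements is dense in F and lim_{n→∞} S^n_{α,w} f = 0 in F for every f ∈ 𝒫((C^{(n)}_{α,w})_{n∈ℕ₀}), then for every compact subset K of X there exist a sequence (D_k)_{k=1}^∞ of Borel subsets of K and a strictly increasing sequence (n_k) of positive integers such that lim_{k→∞} ‖χ_{K∖D_k}‖_F = 0 and lim_{k→∞} ‖χ_{D_k} · ∏_{s=1}^{n_k} (w∘α^{−s})‖_F = 0. -/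
open Filter Topology

/-- A Banach function space on `X`: a Banach space `F` together with an injective linear
embedding into the Borel measurable functions `X → ℂ`. -/
structure BanachFunctionSpace (X : Type*) [TopologicalSpace X] [MeasurableSpace X]
    (F : Type*) [NormedAddCommGroup F] [NormedSpace ℂ F] [CompleteSpace F] where
  toFunL : F →ₗ[ℂ] (X → ℂ)
  injective : Function.Injective toFunL
  measurable' : ∀ f : F, Measurable (toFunL f)

namespace BanachFunctionSpace

variable {X : Type*} [TopologicalSpace X] [MeasurableSpace X]
  {F : Type*} [NormedAddCommGroup F] [NormedSpace ℂ F] [CompleteSpace F]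

/-- `F` is solid: it contains, with controlled norm, every measurable function dominated
pointwise by a member of `F`. -/
def IsSolid (B : BanachFunctionSpace X F) : Prop :=
  ∀ (f : F) (g : X → ℂ), Measurable g → (∀ x, ‖g x‖ ≤ ‖B.toFunL f x‖) →
    ∃ g' : F, B.toFunL g' = g ∧ ‖g'‖ ≤ ‖f‖

/-- `F` is `α`-invariant: composition with `α` and `α⁻¹` preserves membership and the norm. -/
def IsInvariant (B : BanachFunctionSpace X F) (α : X ≃ X) : Prop :=
  ∀ f : F, (∃ g : F, B.toFunL g = B.toFunL f ∘ ⇑α ∧ ‖g‖ = ‖f‖) ∧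
    (∃ g : F, B.toFunL g = B.toFunL f ∘ ⇑α.symm ∧ ‖g‖ = ‖f‖)

/-- The characteristic function of every compact subset of `X` belongs to `F`. -/
def HasCompactIndicators (B : BanachFunctionSpace X F) : Prop :=
  ∀ E : Set X, IsCompact E → ∃ f : F, B.toFunL f = Set.indicator E 1

/-- The bounded compactly supported functions in `F` are dense in `F`. -/
def DenseBoundedCompact (B : BanachFunctionSpace X F) : Prop :=
  Dense {f : F | (∃ C : ℝ, ∀ x, ‖B.toFunL f x‖ ≤ C) ∧
    ∃ K : Set X, IsCompact K ∧ ∀ x ∉ K, B.toFunL f x = 0}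

/-- Condition `Ω_α`. -/
def ConditionOmega (B : BanachFunctionSpace X F) (α : X ≃ X) : Prop :=
  B.IsSolid ∧ B.IsInvariant α ∧ B.HasCompactIndicators ∧ B.DenseBoundedCompact

end BanachFunctionSpace

/-- `w` and `1/w` are both weights: `w` is Borel measurable, bounded above, and bounded
away from `0`. -/
def IsWeightPair {X : Type*} [MeasurableSpace X] (w : X → ℝ) : Prop :=
  Measurable w ∧ (∃ C : ℝ, ∀ x, w x ≤ C) ∧ ∃ c : ℝ, 0 < c ∧ ∀ x, c ≤ w x

/-- `α` is aperiodic: every compact set is eventually moved off itself by the iterates. -/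
def Aperiodic {X : Type*} [TopologicalSpace X] (α : X ≃ X) : Prop :=
  ∀ K : Set X, IsCompact K → ∃ N : ℕ, 0 < N ∧ ∀ n ≥ N, (⇑α)^[n] '' K ∩ K = ∅

/-- The cosine operator sequence `C⁽ⁿ⁾ = (1/2)(Tⁿ + Sⁿ)`. -/
noncomputable def cosOp {F : Type*} [NormedAddCommGroup F] [NormedSpace ℂ F]
    (T S : F →L[ℂ] F) (n : ℕ) : F →L[ℂ] F :=
  (2 : ℂ)⁻¹ • (T ^ n + S ^ n)

/-- The set of periodic elements of a sequence of operators. -/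
def periodicSet {F : Type*} [NormedAddCommGroup F] [NormedSpace ℂ F]
    (C : ℕ → F →L[ℂ] F) : Set F :=
  {f | ∃ N : ℕ, 0 < N ∧ ∀ k : ℕ, 0 < k → C (k * N) f = f}

/-- Topological transitivity of a sequence of operators. -/
def TopTransitive {F : Type*} [NormedAddCommGroup F] [NormedSpace ℂ F]
    (C : ℕ → F →L[ℂ] F) : Prop :=
  ∀ U V : Set F, IsOpen U → IsOpen V → U.Nonempty → V.Nonempty →
    ∃ n : ℕ, 0 < n ∧ (⇑(C n) '' U ∩ V).Nonempty

/-- A sequence of operators is chaotic if it is topologically transitive and its set of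
periodic elements is dense. -/
def IsChaotic {F : Type*} [NormedAddCommGroup F] [NormedSpace ℂ F]
    (C : ℕ → F →L[ℂ] F) : Prop :=
  TopTransitive C ∧ Dense (periodicSet C)

/-! Approximate `χ_K` by a periodic `f` with `‖χ_K - f‖ < ε²`; by Markov's inequality the part
of `K` where `|f - 1| ≥ ε` has indicator of norm `≤ ε`, and `D` is the rest of `K`. For a large
multiple `n` of a period of `f`, `Tⁿ f = 2 f - Sⁿ f` is within `2ε² + ε` of `2 χ_K`, and by
aperiodicity `α⁻ⁿ D` is disjoint from `K`. On `α⁻ⁿ D` we have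
`|Tⁿ f| ≥ (1 - ε) ∏_{s<n} w ∘ αˢ`, so solidity and `α`-invariance bound the weighted indicator
of `D`. -/

lemma prod_Icc_symm_iterate_apply_iterate {X M : Type*} [CommMonoid M] (α : X ≃ X) (w : X → M)
    (n : ℕ) (x : X) :
    ∏ s ∈ Finset.Icc 1 n, w ((⇑α.symm)^[s] ((⇑α)^[n] x)) =
      ∏ s ∈ Finset.range n, w ((⇑α)^[s] x) := by
  induction n generalizing x with
  | zero => simp
  | succ n ih =>
    rw [Finset.prod_Icc_succ_top (by omega),
      Function.LeftInverse.iterate α.symm_apply_apply (n + 1) x, Finset.prod_range_succ']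
    simp only [Function.iterate_succ_apply]
    rw [ih]
    rfl

lemma cosOp_apply_eq_self_iff {F : Type*} [NormedAddCommGroup F] [NormedSpace ℂ F]
    {T S : F →L[ℂ] F} {n : ℕ} {f : F} :
    cosOp T S n f = f ↔ (T ^ n) f + (S ^ n) f = (2 : ℂ) • f := by
  rw [cosOp, smul_apply, add_apply, inv_smul_eq_iff₀ two_ne_zero]

lemma frequently_apply_eq_self_of_mem_periodicSet {F : Type*} [NormedAddCommGroup F]
    [NormedSpace ℂ F] {C : ℕ → F →L[ℂ] F} {f : F} (hf : f ∈ periodicSet C) :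
    ∃ᶠ n in atTop, C n f = f := by
  obtain ⟨N, hN, hper⟩ := hf
  refine frequently_atTop'.2 fun m => ⟨(m + 1) * N, ?_, hper _ m.succ_pos⟩
  nlinarith

namespace BanachFunctionSpace

variable {X : Type*} [TopologicalSpace X] [MeasurableSpace X]
  {F : Type*} [NormedAddCommGroup F] [NormedSpace ℂ F] [CompleteSpace F]
  {B : BanachFunctionSpace X F}

lemma measurableSet_of_toFunL_eq_indicator {f : F} {K : Set X}
    (hf : B.toFunL f = K.indicator 1) : MeasurableSet K :=
  (measurable_indicator_const_iff (1 : ℂ)).1 (hf ▸ B.measurable' f)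

lemma IsSolid.exists_norm_le_mul (hB : B.IsSolid) {g : X → ℂ} (hg : Measurable g) (f : F)
    {c : ℝ} (hc : 0 ≤ c) (hle : ∀ x, ‖g x‖ ≤ c * ‖B.toFunL f x‖) :
    ∃ g' : F, B.toFunL g' = g ∧ ‖g'‖ ≤ c * ‖f‖ := by
  obtain ⟨g', hg', hnorm⟩ := hB ((c : ℂ) • f) g hg fun x => by
    simpa [norm_smul, abs_of_nonneg hc] using hle x
  exact ⟨g', hg', by simpa [norm_smul, abs_of_nonneg hc] using hnorm⟩

/-- Markov's inequality in a solid space. -/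
lemma IsSolid.exists_indicator_norm_le (hB : B.IsSolid) {A : Set X} (hA : MeasurableSet A)
    (u : F) {ε : ℝ} (hε : 0 < ε) (hAu : ∀ x ∈ A, ε ≤ ‖B.toFunL u x‖) :
    ∃ g : F, B.toFunL g = A.indicator 1 ∧ ‖g‖ ≤ ε⁻¹ * ‖u‖ := by
  refine hB.exists_norm_le_mul (measurable_one.indicator hA) u (inv_nonneg.2 hε.le) fun x => ?_
  by_cases hx : x ∈ A
  · rw [Set.indicator_of_mem hx, Pi.one_apply, norm_one]
    exact (one_le_inv_mul₀ hε).2 (hAu x hx)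
  · rw [Set.indicator_of_notMem hx, norm_zero]
    positivity

lemma toFunL_pow_apply {α : X → X} {w : X → ℂ} {T : F →L[ℂ] F}
    (hT : ∀ f x, B.toFunL (T f) x = w x * B.toFunL f (α x)) (n : ℕ) (f : F) (x : X) :
    B.toFunL ((T ^ n) f) x =
      (∏ s ∈ Finset.range n, w (α^[s] x)) * B.toFunL f (α^[n] x) := by
  induction n generalizing f with
  | zero => simp
  | succ n ih =>
    rw [pow_succ, mul_apply_eq_comp, ih, hT, Finset.prod_range_succ,
      Function.iterate_succ_apply']
    ring

variable {α : X ≃ X} {w : X → ℝ} {T : F →L[ℂ] F}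

lemma IsInvariant.exists_comp_symm_iterate (hB : B.IsInvariant α) (n : ℕ) (f : F) :
    ∃ g : F, B.toFunL g = B.toFunL f ∘ (⇑α.symm)^[n] ∧ ‖g‖ = ‖f‖ := by
  induction n with
  | zero => exact ⟨f, rfl, rfl⟩
  | succ n ih =>
    obtain ⟨g, hg, hgf⟩ := ih
    obtain ⟨g', hg', hg'g⟩ := (hB g).2
    exact ⟨g', by rw [hg', hg, Function.iterate_succ]; rfl, hg'g.trans hgf⟩

lemma exists_toFunL_eq_indicator_prod (hmα : Measurable ⇑α) (hmαs : Measurable ⇑α.symm)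
    (hsolid : B.IsSolid) (hinv : B.IsInvariant α) (hwm : Measurable w)
    (hT : ∀ f x, B.toFunL (T f) x = (w x : ℂ) * B.toFunL f (α x))
    {D : Set X} (hD : MeasurableSet D) (n : ℕ) {f u : F} {c : ℝ} (hc : 0 < c)
    (hfD : ∀ x ∈ D, c ≤ ‖B.toFunL f x‖)
    (hu : ∀ y, (⇑α)^[n] y ∈ D → B.toFunL u y = B.toFunL ((T ^ n) f) y) :
    ∃ h : F, B.toFunL h = D.indicator
        (fun x => ((∏ s ∈ Finset.Icc 1 n, w ((⇑α.symm)^[s] x) : ℝ) : ℂ)) ∧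
      ‖h‖ ≤ c⁻¹ * ‖u‖ := by
  set v : X → ℂ := D.indicator fun x => ((∏ s ∈ Finset.Icc 1 n, w ((⇑α.symm)^[s] x) : ℝ) : ℂ)
    with hv_def
  have hv : Measurable v :=
    (Complex.measurable_ofReal.comp
      (Finset.measurable_prod _ fun s _ => hwm.comp (hmαs.iterate s))).indicator hD
  have hle : ∀ y, ‖(v ∘ (⇑α)^[n]) y‖ ≤ c⁻¹ * ‖B.toFunL u y‖ := fun y => by
    by_cases hy : (⇑α)^[n] y ∈ D
    · rw [Function.comp_apply, hv_def, Set.indicator_of_mem hy, hu y hy, toFunL_pow_apply hT,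
        prod_Icc_symm_iterate_apply_iterate, norm_mul, ← Complex.ofReal_prod, mul_left_comm]
      exact le_mul_of_one_le_right (norm_nonneg _) ((one_le_inv_mul₀ hc).2 (hfD _ hy))
    · rw [Function.comp_apply, hv_def, Set.indicator_of_notMem hy, norm_zero]
      positivity
  obtain ⟨q, hq, hqu⟩ := hsolid.exists_norm_le_mul (hv.comp (hmα.iterate n)) u
    (inv_nonneg.2 hc.le) hle
  obtain ⟨h, hh, hhq⟩ := hinv.exists_comp_symm_iterate n q
  refine ⟨h, ?_, hhq ▸ hqu⟩
  rw [hh, hq, Function.comp_assoc,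
    (Function.LeftInverse.iterate α.apply_symm_apply n).comp_eq_id, Function.comp_id]

lemma frequently_exists_indicator_norm_le (hmα : Measurable ⇑α) (hmαs : Measurable ⇑α.symm)
    (hsolid : B.IsSolid) (hinv : B.IsInvariant α) (hwm : Measurable w)
    (hT : ∀ f x, B.toFunL (T f) x = (w x : ℂ) * B.toFunL f (α x)) {S : F →L[ℂ] F}
    (hdense : Dense (periodicSet (cosOp T S)))
    (hlim : ∀ f ∈ periodicSet (cosOp T S), Tendsto (fun n : ℕ => (S ^ n) f) atTop (𝓝 0))
    {K : Set X} {f₀ : F} (hf₀ : B.toFunL f₀ = K.indicator 1)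
    (hK : ∀ᶠ n in atTop, (⇑α)^[n] '' K ∩ K = ∅) {ε : ℝ} (hε : 0 < ε) (hε2 : ε ≤ 1 / 2) :
    ∃ᶠ n in atTop, ∃ (D : Set X) (g h : F), MeasurableSet D ∧ D ⊆ K ∧
      B.toFunL g = (K \ D).indicator 1 ∧ ‖g‖ ≤ ε ∧
      B.toFunL h = D.indicator
        (fun x => ((∏ s ∈ Finset.Icc 1 n, w ((⇑α.symm)^[s] x) : ℝ) : ℂ)) ∧
      ‖h‖ ≤ 4 * ε := by
  obtain ⟨f, hfper, hf⟩ := hdense.exists_dist_lt f₀ (pow_pos hε 2)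
  rw [dist_eq_norm] at hf
  set D := {x | x ∈ K ∧ ‖B.toFunL f x - 1‖ < ε}
  have hKm : MeasurableSet K := measurableSet_of_toFunL_eq_indicator hf₀
  have hDm : MeasurableSet D :=
    hKm.inter (measurableSet_lt ((B.measurable' f).sub_const 1).norm measurable_const)
  obtain ⟨g, hg, hgf⟩ := hsolid.exists_indicator_norm_le (hKm.diff hDm) (f₀ - f) hε
    fun x ⟨hxK, hxD⟩ => by
      rw [map_sub, Pi.sub_apply, hf₀, Set.indicator_of_mem hxK, Pi.one_apply, norm_sub_rev]
      exact not_lt.1 fun h => hxD ⟨hxK, h⟩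
  have hgε : ‖g‖ ≤ ε := by
    calc ‖g‖ ≤ ε⁻¹ * ε ^ 2 := hgf.trans (by gcongr)
      _ = ε := by field_simp
  refine ((frequently_apply_eq_self_of_mem_periodicSet hfper).and_eventually
    (((hlim f hfper).norm.eventually (gt_mem_nhds (by rwa [norm_zero]))).and hK)).mono ?_
  rintro n ⟨hper, hSn, hnK⟩
  rw [cosOp_apply_eq_self_iff] at hper
  have hfD : ∀ x ∈ D, 1 - ε ≤ ‖B.toFunL f x‖ := fun x hx => by
    linarith [norm_sub_norm_le (1 : ℂ) (B.toFunL f x), norm_sub_rev (1 : ℂ) (B.toFunL f x),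
      norm_one (α := ℂ), hx.2]
  -- aperiodicity: `αⁿ y ∈ K` forces `y ∉ K`, where `f₀` vanishes
  have hu : ∀ y, (⇑α)^[n] y ∈ D →
      B.toFunL ((T ^ n) f - (2 : ℂ) • f₀) y = B.toFunL ((T ^ n) f) y := fun y hy => by
    have hyK : y ∉ K := fun hyK => (Set.eq_empty_iff_forall_notMem.1 hnK) _ ⟨⟨y, hyK, rfl⟩, hy.1⟩
    simp [hf₀, Set.indicator_of_notMem hyK]
  obtain ⟨h, hh, hhu⟩ := exists_toFunL_eq_indicator_prod hmα hmαs hsolid hinv hwm hT hDm n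
    (by linarith) hfD hu
  have hu_le : ‖(T ^ n) f - (2 : ℂ) • f₀‖ ≤ 2 * ε := by
    have hu_eq : (T ^ n) f - (2 : ℂ) • f₀ = (2 : ℂ) • (f - f₀) - (S ^ n) f := by
      rw [smul_sub, ← hper]; abel
    rw [hu_eq]
    calc ‖(2 : ℂ) • (f - f₀) - (S ^ n) f‖ ≤ 2 * ‖f₀ - f‖ + ‖(S ^ n) f‖ := by
          simpa [norm_smul, norm_sub_rev f] using norm_sub_le ((2 : ℂ) • (f - f₀)) ((S ^ n) f)
      _ ≤ 2 * ε ^ 2 + ε := by gcongr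
      _ ≤ 2 * ε := by nlinarith
  have hinv_le : (1 - ε)⁻¹ ≤ 2 := by
    rw [inv_le_comm₀ (by linarith) two_pos]; linarith
  refine ⟨D, g, h, hDm, fun x hx => hx.1, hg, hgε, hh, hhu.trans ?_⟩
  calc (1 - ε)⁻¹ * ‖(T ^ n) f - (2 : ℂ) • f₀‖ ≤ 2 * (2 * ε) :=
        mul_le_mul hinv_le hu_le (norm_nonneg _) zero_le_two
    _ = 4 * ε := by ring

end BanachFunctionSpace

theorem stmt0_general {X : Type*} [TopologicalSpace X] [MeasurableSpace X]
    {F : Type*} [NormedAddCommGroup F] [NormedSpace ℂ F] [CompleteSpace F]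
    (B : BanachFunctionSpace X F) (α : X ≃ X)
    (hmα : Measurable (⇑α)) (hmαs : Measurable (⇑α.symm))
    (hα : Aperiodic α) (hΩ : B.ConditionOmega α)
    (w : X → ℝ) (hw : IsWeightPair w) (T : F →L[ℂ] F)
    (hT : ∀ (f : F) (x : X), B.toFunL (T f) x = (w x : ℂ) * B.toFunL f (α x)) (S : F →L[ℂ] F)
    (hdense : Dense (periodicSet (cosOp T S)))
    (hlim : ∀ f ∈ periodicSet (cosOp T S), Tendsto (fun n : ℕ => (S ^ n) f) atTop (𝓝 0)) :
    ∀ K : Set X, IsCompact K →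
      ∃ (D : ℕ → Set X) (nk : ℕ → ℕ) (g h : ℕ → F),
        (∀ k, MeasurableSet (D k)) ∧ (∀ k, D k ⊆ K) ∧
        StrictMono nk ∧ (∀ k, 0 < nk k) ∧
        (∀ k, B.toFunL (g k) = Set.indicator (K \ D k) 1) ∧
        Tendsto (fun k => ‖g k‖) atTop (𝓝 0) ∧
        (∀ k, B.toFunL (h k) = Set.indicator (D k)
          (fun x => ((∏ s ∈ Finset.Icc 1 (nk k), w ((⇑α.symm)^[s] x) : ℝ) : ℂ))) ∧
        Tendsto (fun k => ‖h k‖) atTop (𝓝 0) := by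
  intro K hK
  obtain ⟨hsolid, hinv, hind, -⟩ := hΩ
  obtain ⟨f₀, hf₀⟩ := hind K hK
  obtain ⟨N₀, -, hN₀⟩ := hα K hK
  set ε : ℕ → ℝ := fun k => ((k : ℝ) + 2)⁻¹
  have hε : ∀ k, 0 < ε k ∧ ε k ≤ 1 / 2 := fun k =>
    ⟨by positivity, by rw [one_div]; exact inv_anti₀ two_pos (by simp)⟩
  obtain ⟨nk, hmono, hnk⟩ := extraction_forall_of_frequently fun k =>
    (eventually_gt_atTop 0).and_frequently <|
      BanachFunctionSpace.frequently_exists_indicator_norm_le hmα hmαs hsolid hinv hw.1 hT hdense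
        hlim hf₀ (eventually_atTop.2 ⟨N₀, hN₀⟩) (hε k).1 (hε k).2
  choose hpos D g h hDm hDK hg hgε hh hhε using hnk
  have hε0 : Tendsto ε atTop (𝓝 0) :=
    tendsto_inv_atTop_zero.comp (tendsto_atTop_add_const_right _ 2 tendsto_natCast_atTop_atTop)
  refine ⟨D, nk, g, h, hDm, hDK, hmono, hpos, hg, ?_, hh, ?_⟩
  · exact squeeze_zero (fun _ => norm_nonneg _) hgε hε0
  · exact squeeze_zero (fun _ => norm_nonneg _) hhε (by simpa using hε0.const_mul 4)

/-- necessary condition (Theorem `main` of the paper) for density of the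
periodic elements of the cosine operator sequence together with `Sⁿf → 0` on them. -/
theorem stmt0 {X : Type*} [TopologicalSpace X] [MeasurableSpace X] [BorelSpace X]
    {F : Type*} [NormedAddCommGroup F] [NormedSpace ℂ F] [CompleteSpace F]
    (B : BanachFunctionSpace X F) (α : X ≃ X)
    (hmα : Measurable (⇑α)) (hmαs : Measurable (⇑α.symm))
    (hα : Aperiodic α) (hΩ : B.ConditionOmega α)
    (w : X → ℝ) (hw : IsWeightPair w) (T : F →L[ℂ] F)
    (hT : ∀ (f : F) (x : X), B.toFunL (T f) x = (w x : ℂ) * B.toFunL f (α x)) (S : F →L[ℂ] F) (hST : ∀ f : F, S (T f) = f) (hTS : ∀ f : F, T (S f) = f)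
    (hdense : Dense (periodicSet (cosOp T S)))
    (hlim : ∀ f ∈ periodicSet (cosOp T S), Tendsto (fun n : ℕ => (S ^ n) f) atTop (𝓝 0)) :
    ∀ K : Set X, IsCompact K →
      ∃ (D : ℕ → Set X) (nk : ℕ → ℕ) (g h : ℕ → F),
        (∀ k, MeasurableSet (D k)) ∧ (∀ k, D k ⊆ K) ∧
        StrictMono nk ∧ (∀ k, 0 < nk k) ∧
        (∀ k, B.toFunL (g k) = Set.indicator (K \ D k) 1) ∧
        Tendsto (fun k => ‖g k‖) atTop (𝓝 0) ∧
        (∀ k, B.toFunL (h k) = Set.indicator (D k)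
          (fun x => ((∏ s ∈ Finset.Icc 1 (nk k), w ((⇑α.symm)^[s] x) : ℝ) : ℂ))) ∧
        Tendsto (fun k => ‖h k‖) atTop (𝓝 0) :=
  stmt0_general B α hmα hmαs hα hΩ w hw T hT S hdense hlim
end

section
/- Let X be a topological space, let α : X → X be an aperiodic Borel measurable bijection with Borel measurable inverse, let F be a Banach function space on X satisfying condition Ω_α, and let w and 1/w both be weights on X. Suppose X has a compact subset K with ‖χ_K‖_F > 0. If inf_{x∈X} w(x) > 1, then the set 𝒫((C^{(n)}_{α,w})_{n∈ℕ₀}) of periodic elements is not dense in F; in particular, the sequence (C^{(n)}_{α,w})_{n∈ℕ₀} is not chaotic. -/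
open Filter Topology

/-! A periodic vector `f` of `C⁽ⁿ⁾ = (Tⁿ + Sⁿ)/2` satisfies `Tᵐ f = 2 f - Sᵐ f` along its periods `m`.
Since `inf w > 1`, solidity and `α`-invariance make `T` expand norms by the factor `c = inf w`,
so `cᵐ ‖f‖ ≤ ‖Tᵐ f‖ ≤ 2 ‖f‖ + ‖Sᵐ f‖ ≤ 3 ‖f‖` with `m` arbitrarily large, forcing `f = 0`.
Thus the periodic vectors form `{0}`, which is not dense in `F ≠ 0`. -/

namespace BanachFunctionSpace

variable {X : Type*} [TopologicalSpace X] [MeasurableSpace X]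
  {F : Type*} [NormedAddCommGroup F] [NormedSpace ℂ F] [CompleteSpace F]
  {B : BanachFunctionSpace X F}

theorem IsSolid.norm_le_of_forall_norm_le (hB : B.IsSolid) {f g : F}
    (h : ∀ x, ‖B.toFunL g x‖ ≤ ‖B.toFunL f x‖) : ‖g‖ ≤ ‖f‖ := by
  obtain ⟨g', hg', hle⟩ := hB f (B.toFunL g) (B.measurable' g) h
  rwa [B.injective hg'] at hle

theorem IsSolid.mul_norm_le_norm_of_le_weight (hB : B.IsSolid) {α : X ≃ X}
    (hα : B.IsInvariant α) {w : X → ℝ} {T : F → F}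
    (hT : ∀ f x, B.toFunL (T f) x = (w x : ℂ) * B.toFunL f (α x))
    {c : ℝ} (hc : 0 ≤ c) (hcw : ∀ x, c ≤ w x) (f : F) : c * ‖f‖ ≤ ‖T f‖ := by
  obtain ⟨g, hg, hgf⟩ := (hα (T f)).2
  have hg_apply (x : X) : B.toFunL g x = (w (α.symm x) : ℂ) * B.toFunL f x := by
    simp only [hg, Function.comp_apply, hT, Equiv.apply_symm_apply]
  calc c * ‖f‖ = ‖(c : ℂ) • f‖ := by
        rw [norm_smul, Complex.norm_real, Real.norm_of_nonneg hc]
    _ ≤ ‖g‖ := hB.norm_le_of_forall_norm_le fun x => by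
        rw [map_smul, Pi.smul_apply, smul_eq_mul, hg_apply, norm_mul, norm_mul,
          Complex.norm_real, Complex.norm_real, Real.norm_of_nonneg hc,
          Real.norm_of_nonneg (hc.trans (hcw _))]
        gcongr
        exact hcw _
    _ = ‖T f‖ := hgf

end BanachFunctionSpace

section ExpandingOperators

variable {E : Type*} [SeminormedAddCommGroup E] {T S : E → E} {c : ℝ}

theorem pow_mul_norm_le_norm_iterate (hc : 0 ≤ c) (hT : ∀ x, c * ‖x‖ ≤ ‖T x‖) (n : ℕ)
    (x : E) : c ^ n * ‖x‖ ≤ ‖T^[n] x‖ := by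
  induction n with
  | zero => simp
  | succ n ih =>
    calc c ^ (n + 1) * ‖x‖ = c * (c ^ n * ‖x‖) := by ring
      _ ≤ c * ‖T^[n] x‖ := by gcongr
      _ ≤ ‖T^[n + 1] x‖ := by rw [Function.iterate_succ_apply']; exact hT _

theorem pow_mul_norm_iterate_le_norm (hc : 0 ≤ c) (hT : ∀ x, c * ‖x‖ ≤ ‖T x‖)
    (hTS : Function.LeftInverse T S) (n : ℕ) (x : E) : c ^ n * ‖S^[n] x‖ ≤ ‖x‖ := by
  simpa only [hTS.iterate n x] using pow_mul_norm_le_norm_iterate hc hT n (S^[n] x)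

end ExpandingOperators

theorem cosOp_apply {E : Type*} [NormedAddCommGroup E] [NormedSpace ℂ E] (T S : E →L[ℂ] E)
    (n : ℕ) (x : E) : cosOp T S n x = (2 : ℂ)⁻¹ • (T^[n] x + S^[n] x) := by
  simp [cosOp]

theorem periodicSet_cosOp_subset_zero {E : Type*} [NormedAddCommGroup E] [NormedSpace ℂ E]
    {T S : E →L[ℂ] E} {c : ℝ} (hc : 1 < c) (hT : ∀ x, c * ‖x‖ ≤ ‖T x‖)
    (hTS : Function.LeftInverse T S) : periodicSet (cosOp T S) ⊆ {0} := by
  rintro f ⟨N, hN, hper⟩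
  obtain ⟨k, hk⟩ := pow_unbounded_of_one_lt (3 : ℝ) hc
  set m := (k + 1) * N
  have hTm : T^[m] f = (2 : ℂ) • f - S^[m] f := by
    have h := hper (k + 1) k.succ_pos
    rw [cosOp_apply, inv_smul_eq_iff₀ two_ne_zero] at h
    rw [← h, add_sub_cancel_right]
  have hSm : ‖S^[m] f‖ ≤ ‖f‖ := by
    nlinarith [one_le_pow₀ (n := m) hc.le, norm_nonneg (S^[m] f),
      pow_mul_norm_iterate_le_norm (by linarith) hT hTS m f]
  have hcm : 3 < c ^ m :=
    hk.trans_le (pow_le_pow_right₀ hc.le ((Nat.le_succ k).trans (Nat.le_mul_of_pos_right _ hN)))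
  have hbound : c ^ m * ‖f‖ ≤ 3 * ‖f‖ :=
    calc c ^ m * ‖f‖ ≤ ‖T^[m] f‖ := pow_mul_norm_le_norm_iterate (by linarith) hT m f
      _ ≤ ‖(2 : ℂ) • f‖ + ‖S^[m] f‖ := hTm ▸ norm_sub_le _ _
      _ ≤ 3 * ‖f‖ := by rw [norm_smul, Complex.norm_two]; linarith
  exact norm_le_zero_iff.1 (by nlinarith [norm_nonneg f])

theorem stmt1_general {X : Type*} [TopologicalSpace X] [MeasurableSpace X]
    {F : Type*} [NormedAddCommGroup F] [NormedSpace ℂ F] [CompleteSpace F]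
    (B : BanachFunctionSpace X F) (α : X ≃ X)
    (hΩ : B.ConditionOmega α)
    (w : X → ℝ) (hw : IsWeightPair w) (T : F →L[ℂ] F)
    (hT : ∀ (f : F) (x : X), B.toFunL (T f) x = (w x : ℂ) * B.toFunL f (α x)) (S : F →L[ℂ] F) (hTS : ∀ f : F, T (S f) = f)
    (cK : F)
    (hcKpos : 0 < ‖cK‖)
    (hinf : 1 < ⨅ x, w x) :
    ¬ Dense (periodicSet (cosOp T S)) ∧ ¬ IsChaotic (cosOp T S) := by
  obtain ⟨hsolid, hinv, -, -⟩ := hΩ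
  obtain ⟨-, -, c, -, hcw⟩ := hw
  have hwinf (x : X) : ⨅ x, w x ≤ w x := ciInf_le ⟨c, Set.forall_mem_range.2 hcw⟩ x
  have hexpand := hsolid.mul_norm_le_norm_of_le_weight hinv hT (by linarith) hwinf
  have hper := periodicSet_cosOp_subset_zero hinf hexpand hTS
  have hnd : ¬ Dense (periodicSet (cosOp T S)) := fun hd => by
    have hcK : cK ∈ closure {0} := (hd.mono hper) cK
    rw [closure_singleton, Set.mem_singleton_iff] at hcK
    simp [hcK] at hcKpos
  exact ⟨hnd, fun h => hnd h.2⟩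

/-- if `inf w > 1` then the periodic elements are not dense, so the cosine
operator sequence is not chaotic. -/
theorem stmt1 {X : Type*} [TopologicalSpace X] [MeasurableSpace X] [BorelSpace X]
    {F : Type*} [NormedAddCommGroup F] [NormedSpace ℂ F] [CompleteSpace F]
    (B : BanachFunctionSpace X F) (α : X ≃ X)
    (hmα : Measurable (⇑α)) (hmαs : Measurable (⇑α.symm))
    (hα : Aperiodic α) (hΩ : B.ConditionOmega α)
    (w : X → ℝ) (hw : IsWeightPair w) (T : F →L[ℂ] F)
    (hT : ∀ (f : F) (x : X), B.toFunL (T f) x = (w x : ℂ) * B.toFunL f (α x)) (S : F →L[ℂ] F) (hST : ∀ f : F, S (T f) = f) (hTS : ∀ f : F, T (S f) = f)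
    (K : Set X) (hK : IsCompact K) (cK : F)
    (hcK : B.toFunL cK = Set.indicator K 1) (hcKpos : 0 < ‖cK‖)
    (hinf : 1 < ⨅ x, w x) :
    ¬ Dense (periodicSet (cosOp T S)) ∧ ¬ IsChaotic (cosOp T S) :=
  stmt1_general B α hΩ w hw T hT S hTS cK hcKpos hinf
end

section
/- Let X be a topological space, let α : X → X be an aperiodic Borel measurable bijection with Borel measurable inverse, let F be a Banach function space on X satisfying condition Ω_α, and let w and 1/w both be weights on X. Suppose X has a compact subset K with ‖χ_K‖_F > 0. If sup_{x∈X} w(x) < 1, then the set 𝒫((C^{(n)}_{α,w})_{n∈ℕ₀}) of periodic elements is not dense in F; in particular, the sequence (C^{(n)}_{α,w})_{n∈ℕ₀} is not chaotic. -/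
/-!
The weighted translation `T` is dominated pointwise by `sup w` times the isometric translate,
so solidity gives `‖T‖ ≤ sup w < 1`. If `f` is periodic with period `N`, then for `m = kN` the
relation `Tᵐ f + Sᵐ f = 2f` together with `Tᵐ Sᵐ = 1` gives `f = 2 Tᵐ f - T²ᵐ f`, whose right-hand
side tends to `0` as `k → ∞`. Hence `0` is the only periodic element, while `F ≠ 0`.
-/

open Filter Topology

namespace BanachFunctionSpace

variable {X : Type*} [TopologicalSpace X] [MeasurableSpace X]
  {F : Type*} [NormedAddCommGroup F] [NormedSpace ℂ F] [CompleteSpace F]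

theorem opNorm_weightedComp_le {B : BanachFunctionSpace X F} {α : X ≃ X}
    (hsolid : B.IsSolid) (hinv : B.IsInvariant α) {w : X → ℝ} {s : ℝ} (hs : 0 ≤ s)
    (hws : ∀ x, |w x| ≤ s) {T : F →L[ℂ] F}
    (hT : ∀ f x, B.toFunL (T f) x = (w x : ℂ) * B.toFunL f (α x)) : ‖T‖ ≤ s := by
  refine T.opNorm_le_bound hs fun f => ?_
  obtain ⟨g, hg, hgf⟩ := (hinv f).1
  have hdom : ∀ x, ‖B.toFunL (T f) x‖ ≤ ‖B.toFunL ((s : ℂ) • g) x‖ := fun x => by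
    rw [hT, map_smul, Pi.smul_apply, hg, norm_mul, norm_smul, Complex.norm_real,
      Complex.norm_real, Real.norm_eq_abs, Real.norm_of_nonneg hs]
    exact mul_le_mul_of_nonneg_right (hws x) (norm_nonneg _)
  obtain ⟨g', hg', hg'n⟩ := hsolid _ _ (B.measurable' (T f)) hdom
  rw [B.injective hg'] at hg'n
  rwa [norm_smul, Complex.norm_real, Real.norm_of_nonneg hs, hgf] at hg'n

end BanachFunctionSpace

section CosineOperator

variable {F : Type*} [NormedAddCommGroup F] [NormedSpace ℂ F]

theorem tendsto_pow_apply_nhds_zero {T : F →L[ℂ] F} (hT : ‖T‖ < 1) (f : F) :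
    Tendsto (fun n => (T ^ n) f) atTop (𝓝 0) := by
  have h := ((ContinuousLinearMap.apply ℂ F f).continuous.tendsto 0).comp
    (tendsto_pow_atTop_nhds_zero_of_norm_lt_one hT)
  rwa [map_zero] at h

theorem eq_sub_of_cosOp_apply_eq {T S : F →L[ℂ] F} (hTS : T * S = 1) {m : ℕ} {f : F}
    (hf : cosOp T S m f = f) : f = (2 : ℂ) • (T ^ m) f - (T ^ (2 * m)) f := by
  have hsum : (T ^ m) f + (S ^ m) f = (2 : ℂ) • f := by
    conv_rhs => rw [← hf, cosOp, smul_apply, smul_smul, mul_inv_cancel₀ two_ne_zero, one_smul]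
    rfl
  have hS : (S ^ m) f = (2 : ℂ) • f - (T ^ m) f := eq_sub_of_add_eq' hsum
  calc f = (T ^ m * S ^ m) f := by rw [pow_mul_pow_eq_one m hTS, one_apply_eq_self]
    _ = (2 : ℂ) • (T ^ m) f - (T ^ (2 * m)) f := by
      rw [mul_apply_eq_comp, hS, map_sub, map_smul, two_mul, pow_add,
        mul_apply_eq_comp]

theorem eq_zero_of_mem_periodicSet_cosOp {T S : F →L[ℂ] F} (hTS : T * S = 1) (hT : ‖T‖ < 1)
    {f : F} (hf : f ∈ periodicSet (cosOp T S)) : f = 0 := by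
  obtain ⟨N, hN, hper⟩ := hf
  have hm : Tendsto (fun k => (k + 1) * N) atTop atTop :=
    tendsto_atTop_mono (fun k => Nat.le_mul_of_pos_right _ hN |>.trans' k.le_succ) tendsto_id
  have h2m : Tendsto (fun k => 2 * ((k + 1) * N)) atTop atTop :=
    tendsto_atTop_mono (fun _ => Nat.le_mul_of_pos_left _ two_pos) hm
  have hlim : Tendsto (fun k => (2 : ℂ) • (T ^ ((k + 1) * N)) f - (T ^ (2 * ((k + 1) * N))) f)
      atTop (𝓝 0) := by
    simpa using (((tendsto_pow_apply_nhds_zero hT f).comp hm).const_smul (2 : ℂ)).sub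
      ((tendsto_pow_apply_nhds_zero hT f).comp h2m)
  refine tendsto_nhds_unique (tendsto_const_nhds.congr fun k => ?_) hlim
  exact eq_sub_of_cosOp_apply_eq hTS (hper (k + 1) k.succ_pos)

end CosineOperator

theorem stmt3_general {X : Type*} [TopologicalSpace X] [MeasurableSpace X]
    {F : Type*} [NormedAddCommGroup F] [NormedSpace ℂ F] [CompleteSpace F]
    (B : BanachFunctionSpace X F) (α : X ≃ X)
    (hΩ : B.ConditionOmega α)
    (w : X → ℝ) (hw : IsWeightPair w) (T : F →L[ℂ] F)
    (hT : ∀ (f : F) (x : X), B.toFunL (T f) x = (w x : ℂ) * B.toFunL f (α x)) (S : F →L[ℂ] F) (hTS : ∀ f : F, T (S f) = f)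
    (cK : F)
    (hcKpos : 0 < ‖cK‖)
    (hsup : (⨆ x, w x) < 1) :
    ¬ Dense (periodicSet (cosOp T S)) ∧ ¬ IsChaotic (cosOp T S) := by
  obtain ⟨-, ⟨C, hC⟩, c, hc, hcw⟩ := hw
  have hws : ∀ x, |w x| ≤ max (⨆ x, w x) 0 := fun x => by
    rw [abs_of_pos (hc.trans_le (hcw x))]
    exact (le_ciSup ⟨C, Set.forall_mem_range.2 hC⟩ x).trans (le_max_left _ _)
  have hTnorm : ‖T‖ < 1 :=
    (B.opNorm_weightedComp_le hΩ.1 hΩ.2.1 (le_max_right _ _) hws hT).trans_lt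
      (max_lt hsup one_pos)
  have hper : periodicSet (cosOp T S) ⊆ {0} := fun f hf =>
    eq_zero_of_mem_periodicSet_cosOp (ContinuousLinearMap.ext hTS) hTnorm hf
  have hnd : ¬ Dense (periodicSet (cosOp T S)) := fun hd => by
    have hcK : cK ∈ closure {0} := hd.mono hper cK
    rw [closure_singleton, Set.mem_singleton_iff] at hcK
    exact hcKpos.ne' (by rw [hcK, norm_zero])
  exact ⟨hnd, fun h => hnd h.2⟩

/-- if `sup w < 1` then the periodic elements are not dense, so the cosine
operator sequence is not chaotic. -/
theorem stmt3 {X : Type*} [TopologicalSpace X] [MeasurableSpace X] [BorelSpace X]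
    {F : Type*} [NormedAddCommGroup F] [NormedSpace ℂ F] [CompleteSpace F]
    (B : BanachFunctionSpace X F) (α : X ≃ X)
    (hmα : Measurable (⇑α)) (hmαs : Measurable (⇑α.symm))
    (hα : Aperiodic α) (hΩ : B.ConditionOmega α)
    (w : X → ℝ) (hw : IsWeightPair w) (T : F →L[ℂ] F)
    (hT : ∀ (f : F) (x : X), B.toFunL (T f) x = (w x : ℂ) * B.toFunL f (α x)) (S : F →L[ℂ] F) (hST : ∀ f : F, S (T f) = f) (hTS : ∀ f : F, T (S f) = f)
    (K : Set X) (hK : IsCompact K) (cK : F)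
    (hcK : B.toFunL cK = Set.indicator K 1) (hcKpos : 0 < ‖cK‖)
    (hsup : (⨆ x, w x) < 1) :
    ¬ Dense (periodicSet (cosOp T S)) ∧ ¬ IsChaotic (cosOp T S) :=
  stmt3_general B α hΩ w hw T hT S hTS cK hcKpos hsup
end

section
/- Let X be a topological space, let α : X → X be an aperiodic Borel measurable bijection with Borel measurable inverse, let F be a Banach function space on X satisfying condition Ω_α, and let w and 1/w both be weights on X. Suppose X has a compact subset K with ‖χ_K‖_F > 0. If the sequence (C^{(n)}_{α,w})_{n∈ℕ₀} is chaotic, then inf_{x∈X} w(x) ≤ 1 ≤ sup_{x∈X} w(x). -/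
open Filter Topology

/-!
By solidity and `α`-invariance, `c ≤ w` gives `c ‖f‖ ≤ ‖T f‖` and `w ≤ C` gives
`‖T f‖ ≤ C ‖f‖`. If `inf w > 1`, then `T` expands norms by a factor `c > 1` and `S = T⁻¹` is a
contraction; if `sup w < 1`, the roles of `T` and `S` are exchanged. For a periodic element `f`
and a multiple `n` of its period, `2 f = Tⁿ f + Sⁿ f` gives `cⁿ ‖f‖ ≤ ‖Tⁿ f‖ ≤ 3 ‖f‖`, so
`f = 0` once `cⁿ > 3`. The periodic elements can then not be dense in the nonzero space `F`.
-/

open Set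

namespace BanachFunctionSpace

variable {X : Type*} [TopologicalSpace X] [MeasurableSpace X]
  {F : Type*} [NormedAddCommGroup F] [NormedSpace ℂ F] [CompleteSpace F]
  {B : BanachFunctionSpace X F}

theorem IsSolid.norm_le_norm (hB : B.IsSolid) {u v : F}
    (h : ∀ x, ‖B.toFunL u x‖ ≤ ‖B.toFunL v x‖) : ‖u‖ ≤ ‖v‖ := by
  obtain ⟨u', hu', hle⟩ := hB v _ (B.measurable' u) h
  rwa [B.injective hu'] at hle

section WeightedTranslation

variable {α : X ≃ X} {w : X → ℝ} {T : F →L[ℂ] F}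

theorem mul_norm_le_norm_apply_of_forall_le_weight (hB : B.IsSolid) (hI : B.IsInvariant α)
    (hT : ∀ (f : F) (x : X), B.toFunL (T f) x = (w x : ℂ) * B.toFunL f (α x))
    {c : ℝ} (hc : 0 ≤ c) (hcw : ∀ x, c ≤ w x) (f : F) : c * ‖f‖ ≤ ‖T f‖ := by
  obtain ⟨g, hg, hgf⟩ := (hI f).1
  have hle : ‖(c : ℂ) • g‖ ≤ ‖T f‖ := hB.norm_le_norm fun x => by
    rw [map_smul, Pi.smul_apply, smul_eq_mul, hT, hg, norm_mul, norm_mul, Complex.norm_real,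
      Complex.norm_real, Real.norm_of_nonneg hc, Real.norm_of_nonneg (hc.trans (hcw x))]
    exact mul_le_mul_of_nonneg_right (hcw x) (norm_nonneg _)
  rwa [norm_smul, Complex.norm_real, Real.norm_of_nonneg hc, hgf] at hle

theorem norm_apply_le_mul_norm_of_forall_weight_le (hB : B.IsSolid) (hI : B.IsInvariant α)
    (hT : ∀ (f : F) (x : X), B.toFunL (T f) x = (w x : ℂ) * B.toFunL f (α x))
    {C : ℝ} (hC : 0 ≤ C) (hwC : ∀ x, ‖w x‖ ≤ C) (f : F) : ‖T f‖ ≤ C * ‖f‖ := by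
  obtain ⟨g, hg, hgf⟩ := (hI f).1
  have hle : ‖T f‖ ≤ ‖(C : ℂ) • g‖ := hB.norm_le_norm fun x => by
    rw [map_smul, Pi.smul_apply, smul_eq_mul, hT, hg, norm_mul, norm_mul, Complex.norm_real,
      Complex.norm_real, Real.norm_of_nonneg hC]
    exact mul_le_mul_of_nonneg_right (hwC x) (norm_nonneg _)
  rwa [norm_smul, Complex.norm_real, Real.norm_of_nonneg hC, hgf] at hle

end WeightedTranslation

end BanachFunctionSpace

section CosineOperators

variable {F : Type*} [NormedAddCommGroup F] [NormedSpace ℂ F]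

theorem cosOp_comm (T S : F →L[ℂ] F) : cosOp T S = cosOp S T := by
  funext n
  rw [cosOp, cosOp, add_comm]

theorem pow_mul_norm_le_norm_pow_apply {T : F →L[ℂ] F} {c : ℝ} (hc : 0 ≤ c)
    (hT : ∀ f, c * ‖f‖ ≤ ‖T f‖) (n : ℕ) (f : F) : c ^ n * ‖f‖ ≤ ‖(T ^ n) f‖ := by
  induction n with
  | zero => simp
  | succ n ih =>
    rw [pow_succ', pow_succ', mul_apply_eq_comp, mul_assoc]
    exact (mul_le_mul_of_nonneg_left ih hc).trans (hT _)

theorem norm_pow_apply_le {S : F →L[ℂ] F} (hS : ∀ f, ‖S f‖ ≤ ‖f‖) (n : ℕ) (f : F) :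
    ‖(S ^ n) f‖ ≤ ‖f‖ := by
  induction n with
  | zero => simp
  | succ n ih =>
    rw [pow_succ', mul_apply_eq_comp]
    exact (hS _).trans ih

theorem periodicSet_cosOp_subset_zero_s4 {T S : F →L[ℂ] F} {c : ℝ} (hc : 1 < c)
    (hT : ∀ f, c * ‖f‖ ≤ ‖T f‖) (hS : ∀ f, ‖S f‖ ≤ ‖f‖) :
    periodicSet (cosOp T S) ⊆ {0} := by
  rintro f ⟨N, hN, hper⟩
  obtain ⟨m, hm⟩ := pow_unbounded_of_one_lt 3 hc
  set n := (m + 1) * N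
  have hcn : 3 < c ^ n :=
    hm.trans_le (pow_le_pow_right₀ hc.le (Nat.le_succ m |>.trans (Nat.le_mul_of_pos_right _ hN)))
  have hsum : (T ^ n) f + (S ^ n) f = (2 : ℂ) • f := by
    have h2 := congrArg ((2 : ℂ) • ·) (hper (m + 1) m.succ_pos)
    simpa [cosOp, smul_smul] using h2
  have hTn : ‖(T ^ n) f‖ ≤ 3 * ‖f‖ := calc
    ‖(T ^ n) f‖ = ‖(2 : ℂ) • f - (S ^ n) f‖ := by rw [← hsum, add_sub_cancel_right]
    _ ≤ 2 * ‖f‖ + ‖f‖ := by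
      grw [norm_sub_le, norm_smul, norm_pow_apply_le hS]
      norm_num
    _ = 3 * ‖f‖ := by ring
  have hf : ‖f‖ ≤ 0 := by
    nlinarith [pow_mul_norm_le_norm_pow_apply (by linarith) hT n f, norm_nonneg f]
  exact norm_le_zero_iff.mp hf

theorem not_isChaotic_of_periodicSet_subset_zero [Nontrivial F] {C : ℕ → F →L[ℂ] F}
    (h : periodicSet C ⊆ {0}) : ¬ IsChaotic C := fun hC => by
  obtain ⟨f, hf⟩ := exists_ne (0 : F)
  have hclosure := (hC.2.mono h).closure_eq
  rw [closure_singleton] at hclosure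
  exact hf (eq_of_mem_singleton (hclosure ▸ mem_univ f))

end CosineOperators

theorem stmt4_general {X : Type*} [TopologicalSpace X] [MeasurableSpace X]
    {F : Type*} [NormedAddCommGroup F] [NormedSpace ℂ F] [CompleteSpace F]
    (B : BanachFunctionSpace X F) (α : X ≃ X)
    (hΩ : B.ConditionOmega α)
    (w : X → ℝ) (hw : IsWeightPair w) (T : F →L[ℂ] F)
    (hT : ∀ (f : F) (x : X), B.toFunL (T f) x = (w x : ℂ) * B.toFunL f (α x)) (S : F →L[ℂ] F) (hTS : ∀ f : F, T (S f) = f)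
    (cK : F) (hcKpos : 0 < ‖cK‖)
    (hchaos : IsChaotic (cosOp T S)) :
    (⨅ x, w x) ≤ 1 ∧ 1 ≤ ⨆ x, w x := by
  obtain ⟨hsolid, hinv, -⟩ := hΩ
  obtain ⟨-, ⟨Cw, hCw⟩, ⟨cw, hcw, hcw_le⟩⟩ := hw
  have : Nontrivial F := ⟨cK, 0, norm_pos_iff.mp hcKpos⟩
  constructor
  · by_contra! hinf
    have hinf_le : ∀ x, ⨅ x, w x ≤ w x := ciInf_le ⟨cw, forall_mem_range.mpr hcw_le⟩
    have hTexp := B.mul_norm_le_norm_apply_of_forall_le_weight hsolid hinv hT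
      (zero_le_one.trans hinf.le) hinf_le
    have hScontr : ∀ f, ‖S f‖ ≤ ‖f‖ := fun f => calc
      ‖S f‖ ≤ (⨅ x, w x) * ‖S f‖ := le_mul_of_one_le_left (norm_nonneg _) hinf.le
      _ ≤ ‖T (S f)‖ := hTexp (S f)
      _ = ‖f‖ := by rw [hTS]
    exact not_isChaotic_of_periodicSet_subset_zero
      (periodicSet_cosOp_subset_zero_s4 hinf hTexp hScontr) hchaos
  · by_contra! hsup
    have hw_nonneg : ∀ x, 0 ≤ w x := fun x => hcw.le.trans (hcw_le x)
    obtain ⟨C, hC, hC1⟩ := exists_between hsup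
    have hC0 : 0 < C := (Real.iSup_nonneg hw_nonneg).trans_lt hC
    have hwC : ∀ x, ‖w x‖ ≤ C := fun x => by
      rw [Real.norm_of_nonneg (hw_nonneg x)]
      exact (le_ciSup ⟨Cw, forall_mem_range.mpr hCw⟩ x).trans hC.le
    have hTcontr := B.norm_apply_le_mul_norm_of_forall_weight_le hsolid hinv hT hC0.le hwC
    have hSexp : ∀ f, C⁻¹ * ‖f‖ ≤ ‖S f‖ := fun f => by
      rw [inv_mul_le_iff₀ hC0]
      simpa [hTS] using hTcontr (S f)
    refine not_isChaotic_of_periodicSet_subset_zero ?_ hchaos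
    rw [cosOp_comm]
    exact periodicSet_cosOp_subset_zero_s4 (one_lt_inv₀ hC0 |>.mpr hC1) hSexp
      fun f => (hTcontr f).trans (mul_le_of_le_one_left (norm_nonneg f) hC1.le)

/-- if the cosine operator sequence is chaotic then `inf w ≤ 1 ≤ sup w`. -/
theorem stmt4 {X : Type*} [TopologicalSpace X] [MeasurableSpace X] [BorelSpace X]
    {F : Type*} [NormedAddCommGroup F] [NormedSpace ℂ F] [CompleteSpace F]
    (B : BanachFunctionSpace X F) (α : X ≃ X)
    (hmα : Measurable (⇑α)) (hmαs : Measurable (⇑α.symm))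
    (hα : Aperiodic α) (hΩ : B.ConditionOmega α)
    (w : X → ℝ) (hw : IsWeightPair w) (T : F →L[ℂ] F)
    (hT : ∀ (f : F) (x : X), B.toFunL (T f) x = (w x : ℂ) * B.toFunL f (α x)) (S : F →L[ℂ] F) (hST : ∀ f : F, S (T f) = f) (hTS : ∀ f : F, T (S f) = f)
    (K : Set X) (hK : IsCompact K) (cK : F)
    (hcK : B.toFunL cK = Set.indicator K 1) (hcKpos : 0 < ‖cK‖)
    (hchaos : IsChaotic (cosOp T S)) :
    (⨅ x, w x) ≤ 1 ∧ 1 ≤ ⨆ x, w x :=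
  stmt4_general B α hΩ w hw T hT S hTS cK hcKpos hchaos
end

section
/- Let X be a topological space, let α : X → X be a bijection such that α and α⁻¹ are Borel measurable, let F be a solid, α-invariant Banach function space on X, and let w and 1/w both be weights on X. Then for every n ∈ ℕ and f ∈ F, ‖S^n_{α,w} f‖_F ≤ (inf_{x∈X} w(x))^{−n} · ‖f‖_F, where S_{α,w} := T_{α,w}⁻¹. Consequently, if inf_{x∈X} w(x) > 1, then lim_{n→∞} S^n_{α,w} f = 0 in F for every f ∈ F. -/
open Filter Topology

/-!
Since `f = T (S f)`, we have `|(S f)(α x)| = |f x| / w x ≤ (inf w)⁻¹ |f x|`. Solidity turns this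
pointwise bound into `‖(S f) ∘ α‖ ≤ (inf w)⁻¹ ‖f‖`, and `α`-invariance gives `‖S f‖ = ‖(S f) ∘ α‖`.
Hence `‖S‖ ≤ (inf w)⁻¹`, and both claims follow from submultiplicativity of the operator norm.
-/

namespace BanachFunctionSpace

variable {X : Type*} [TopologicalSpace X] [MeasurableSpace X]
  {F : Type*} [NormedAddCommGroup F] [NormedSpace ℂ F] [CompleteSpace F]
  {B : BanachFunctionSpace X F}

theorem subsingleton_of_isEmpty [IsEmpty X] (B : BanachFunctionSpace X F) : Subsingleton F :=
  ⟨fun _ _ => B.injective (funext isEmptyElim)⟩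

theorem norm_le_of_forall_norm_comp_le (hsolid : B.IsSolid) {α : X ≃ X} (hinv : B.IsInvariant α)
    {f g : F} {r : ℝ} (hr : 0 ≤ r) (h : ∀ x, ‖B.toFunL g (α x)‖ ≤ r * ‖B.toFunL f x‖) :
    ‖g‖ ≤ r * ‖f‖ := by
  obtain ⟨g', hg', hnorm⟩ := (hinv g).1
  have hrf : ∀ x, ‖B.toFunL g' x‖ ≤ ‖B.toFunL ((r : ℂ) • f) x‖ := fun x => by
    simpa [hg', norm_smul, abs_of_nonneg hr] using h x
  calc ‖g‖ = ‖g'‖ := hnorm.symm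
    _ ≤ ‖(r : ℂ) • f‖ := hsolid.norm_le_of_forall_norm_le hrf
    _ = r * ‖f‖ := by rw [norm_smul, Complex.norm_real, Real.norm_of_nonneg hr]

theorem norm_inverse_weightedTranslation_apply_le (hsolid : B.IsSolid) {α : X ≃ X}
    (hinv : B.IsInvariant α) {w : X → ℝ} {c : ℝ} (hc : 0 < c) (hcw : ∀ x, c ≤ w x)
    {T S : F →L[ℂ] F} (hT : ∀ (f : F) (x : X), B.toFunL (T f) x = (w x : ℂ) * B.toFunL f (α x))
    (hTS : ∀ f : F, T (S f) = f) (f : F) : ‖S f‖ ≤ c⁻¹ * ‖f‖ := by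
  refine norm_le_of_forall_norm_comp_le hsolid hinv (inv_nonneg.2 hc.le) fun x => ?_
  have hwx : 0 < w x := hc.trans_le (hcw x)
  have hfx : ‖B.toFunL f x‖ = w x * ‖B.toFunL (S f) (α x)‖ := by
    conv_lhs => rw [← hTS f, hT]
    rw [norm_mul, Complex.norm_real, Real.norm_of_nonneg hwx.le]
  rw [hfx, ← mul_assoc]
  exact le_mul_of_one_le_left (norm_nonneg _) ((one_le_inv_mul₀ hc).2 (hcw x))

theorem opNorm_inverse_weightedTranslation_le (hsolid : B.IsSolid) {α : X ≃ X}
    (hinv : B.IsInvariant α) {w : X → ℝ} (hw : IsWeightPair w) {T S : F →L[ℂ] F}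
    (hT : ∀ (f : F) (x : X), B.toFunL (T f) x = (w x : ℂ) * B.toFunL f (α x))
    (hTS : ∀ f : F, T (S f) = f) : ‖S‖ ≤ (⨅ x, w x)⁻¹ := by
  obtain ⟨-, -, c₀, hc₀, hc₀w⟩ := hw
  rcases isEmpty_or_nonempty X with _ | _
  · -- here `⨅ x, w x = 0`, but `F` is trivial
    have := B.subsingleton_of_isEmpty
    simp [Subsingleton.elim S 0]
  have hc : 0 < ⨅ x, w x := hc₀.trans_le (le_ciInf hc₀w)
  refine S.opNorm_le_bound (inv_nonneg.2 hc.le) ?_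
  exact norm_inverse_weightedTranslation_apply_le hsolid hinv hc
    (ciInf_le ⟨c₀, by rintro _ ⟨x, rfl⟩; exact hc₀w x⟩) hT hTS

end BanachFunctionSpace

theorem stmt15_general {X : Type*} [TopologicalSpace X] [MeasurableSpace X]
    {F : Type*} [NormedAddCommGroup F] [NormedSpace ℂ F] [CompleteSpace F]
    (B : BanachFunctionSpace X F) (α : X ≃ X)
    (hsolid : B.IsSolid) (hinv : B.IsInvariant α)
    (w : X → ℝ) (hw : IsWeightPair w) (T : F →L[ℂ] F)
    (hT : ∀ (f : F) (x : X), B.toFunL (T f) x = (w x : ℂ) * B.toFunL f (α x)) (S : F →L[ℂ] F) (hTS : ∀ f : F, T (S f) = f) :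
    (∀ n : ℕ, 0 < n → ∀ f : F, ‖(S ^ n) f‖ ≤ ((⨅ x, w x)⁻¹) ^ n * ‖f‖) ∧
    (1 < (⨅ x, w x) → ∀ f : F, Tendsto (fun n : ℕ => (S ^ n) f) atTop (𝓝 0)) := by
  have hS := B.opNorm_inverse_weightedTranslation_le hsolid hinv hw hT hTS
  have hpow : ∀ n : ℕ, 0 < n → ∀ f : F, ‖(S ^ n) f‖ ≤ ((⨅ x, w x)⁻¹) ^ n * ‖f‖ :=
    fun n hn f => calc
      ‖(S ^ n) f‖ ≤ ‖S ^ n‖ * ‖f‖ := (S ^ n).le_opNorm f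
      _ ≤ ‖S‖ ^ n * ‖f‖ := by gcongr; exact norm_pow_le' S hn
      _ ≤ ((⨅ x, w x)⁻¹) ^ n * ‖f‖ := by gcongr
  refine ⟨hpow, fun hw1 f => ?_⟩
  have hr : Tendsto (fun n : ℕ => ((⨅ x, w x)⁻¹) ^ n * ‖f‖) atTop (𝓝 0) := by
    simpa using (tendsto_pow_atTop_nhds_zero_of_lt_one (inv_nonneg.2 (zero_le_one.trans hw1.le))
      (inv_lt_one_of_one_lt₀ hw1)).mul_const ‖f‖
  rw [tendsto_zero_iff_norm_tendsto_zero]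
  exact squeeze_zero' (.of_forall fun _ => norm_nonneg _)
    ((eventually_gt_atTop 0).mono fun n hn => hpow n hn f) hr

/-- `‖Sⁿf‖ ≤ (inf w)⁻ⁿ ‖f‖`; consequently if `inf w > 1` then `Sⁿf → 0`. -/
theorem stmt15 {X : Type*} [TopologicalSpace X] [MeasurableSpace X] [BorelSpace X]
    {F : Type*} [NormedAddCommGroup F] [NormedSpace ℂ F] [CompleteSpace F]
    (B : BanachFunctionSpace X F) (α : X ≃ X)
    (hmα : Measurable (⇑α)) (hmαs : Measurable (⇑α.symm))
    (hsolid : B.IsSolid) (hinv : B.IsInvariant α)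
    (w : X → ℝ) (hw : IsWeightPair w) (T : F →L[ℂ] F)
    (hT : ∀ (f : F) (x : X), B.toFunL (T f) x = (w x : ℂ) * B.toFunL f (α x)) (S : F →L[ℂ] F) (hST : ∀ f : F, S (T f) = f) (hTS : ∀ f : F, T (S f) = f) :
    (∀ n : ℕ, 0 < n → ∀ f : F, ‖(S ^ n) f‖ ≤ ((⨅ x, w x)⁻¹) ^ n * ‖f‖) ∧
    (1 < (⨅ x, w x) → ∀ f : F, Tendsto (fun n : ℕ => (S ^ n) f) atTop (𝓝 0)) :=
  stmt15_general B α hsolid hinv w hw T hT S hTS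
end

section
/- Let X be a topological space, let α : X → X be a bijection such that α and α⁻¹ are Borel measurable, let F be a solid, α-invariant Banach function space on X containing the characteristic function of every compact subset of X, and let w and 1/w both be weights on X with inf_{x∈X} w(x) > 1. Let K be a compact subset of X with ‖χ_K‖_F > 0, let (D_k)_{k=1}^∞ be Borel subsets of K with lim_{k→∞} ‖χ_{K∖D_k}‖_F = 0, and let (n_k) be a strictly increasing sequence of positive integers. Then lim_{k→∞} ‖χ_{D_k} · ∏_{s=1}^{n_k} (w∘α^{−s})‖_F = ∞. -/
open Filter Topology

/-! Solidity turns the pointwise bound `(inf w)^{n_k} χ_{K ∩ D_k} ≤ χ_{D_k} ∏_{s=1}^{n_k} w∘α^{-s}`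
into `(inf w)^{n_k} ‖χ_K - χ_{K∖D_k}‖ ≤ ‖χ_{D_k} ∏ w∘α^{-s}‖`. The first factor tends to
infinity because `inf w > 1` and `n_k → ∞`, and the second to `‖χ_K‖ > 0`. -/

open Set

/-- Over `ℝ`, `⨅` takes the junk value `0` on families that are not bounded below. -/
theorem Real.bddBelow_range_of_iInf_ne_zero {ι : Sort*} {f : ι → ℝ} (h : ⨅ i, f i ≠ 0) :
    BddBelow (range f) := by
  by_contra hf
  exact h (Real.iInf_of_not_bddBelow hf)

theorem BanachFunctionSpace.IsSolid.norm_le_of_forall_norm_le_s18 {X : Type*} [TopologicalSpace X]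
    [MeasurableSpace X] {F : Type*} [NormedAddCommGroup F] [NormedSpace ℂ F] [CompleteSpace F]
    {B : BanachFunctionSpace X F} (hB : B.IsSolid) {f g : F}
    (hfg : ∀ x, ‖B.toFunL f x‖ ≤ ‖B.toFunL g x‖) : ‖f‖ ≤ ‖g‖ := by
  obtain ⟨f', hf', hnorm⟩ := hB g (B.toFunL f) (B.measurable' f) hfg
  rwa [B.injective hf'] at hnorm

theorem norm_smul_indicator_inter_le {X : Type*} {K D : Set X} {φ : X → ℝ} {c : ℝ}
    (hc : 0 ≤ c) (hφ : ∀ x, c ≤ φ x) (x : X) :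
    ‖(c : ℂ) • (K ∩ D).indicator (1 : X → ℂ) x‖ ≤ ‖D.indicator (fun y => (φ y : ℂ)) x‖ := by
  by_cases hx : x ∈ K ∩ D
  · rw [indicator_of_mem hx, indicator_of_mem hx.2, Pi.one_apply, smul_eq_mul, mul_one,
      Complex.norm_real, Complex.norm_real, Real.norm_of_nonneg hc,
      Real.norm_of_nonneg (hc.trans (hφ x))]
    exact hφ x
  · simp [indicator_of_notMem hx]

theorem stmt18_general {X : Type*} [TopologicalSpace X] [MeasurableSpace X]
    {F : Type*} [NormedAddCommGroup F] [NormedSpace ℂ F] [CompleteSpace F]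
    (B : BanachFunctionSpace X F) (α : X ≃ X)
    (hsolid : B.IsSolid)
    (w : X → ℝ)
    (hinf : 1 < ⨅ x, w x)
    (K : Set X) (cK : F)
    (hcK : B.toFunL cK = Set.indicator K 1) (hcKpos : 0 < ‖cK‖)
    (D : ℕ → Set X)
    (g : ℕ → F) (hg : ∀ k, B.toFunL (g k) = Set.indicator (K \ D k) 1)
    (hg0 : Tendsto (fun k => ‖g k‖) atTop (𝓝 0))
    (nk : ℕ → ℕ) (hnk : StrictMono nk)
    (h : ℕ → F)
    (hh : ∀ k, B.toFunL (h k) = Set.indicator (D k)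
      (fun x => ((∏ s ∈ Finset.Icc 1 (nk k), w ((⇑α.symm)^[s] x) : ℝ) : ℂ))) :
    Tendsto (fun k => ‖h k‖) atTop atTop := by
  set m := ⨅ x, w x
  have hm0 : 0 ≤ m := by linarith
  have hwm : ∀ x, m ≤ w x :=
    ciInf_le (Real.bddBelow_range_of_iInf_ne_zero (by linarith : m ≠ 0))
  have hprod : ∀ n x, m ^ n ≤ ∏ s ∈ Finset.Icc 1 n, w ((⇑α.symm)^[s] x) := fun n x => by
    simpa using Finset.prod_le_prod (s := Finset.Icc 1 n) (fun _ _ => hm0) fun s _ => hwm _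
  have hcK_sub : ∀ k, B.toFunL (cK - g k) = (K ∩ D k).indicator 1 := fun k => by
    rw [map_sub, hcK, hg, ← indicator_sdiff sdiff_subset, sdiff_sdiff_right_self]
  have hlower : ∀ k, m ^ nk k * ‖cK - g k‖ ≤ ‖h k‖ := fun k => by
    have := hsolid.norm_le_of_forall_norm_le_s18 (f := ((m ^ nk k : ℝ) : ℂ) • (cK - g k))
      (g := h k) fun x => by
        rw [map_smul, hcK_sub, hh]
        exact norm_smul_indicator_inter_le (pow_nonneg hm0 _) (hprod _) x
    rwa [norm_smul, Complex.norm_real, Real.norm_of_nonneg (pow_nonneg hm0 _)] at this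
  have hpow : Tendsto (fun k => m ^ nk k) atTop atTop :=
    (tendsto_pow_atTop_atTop_of_one_lt hinf).comp hnk.tendsto_atTop
  have hdiff : Tendsto (fun k => ‖cK - g k‖) atTop (𝓝 ‖cK‖) := by
    simpa using (tendsto_const_nhds.sub (tendsto_zero_iff_norm_tendsto_zero.2 hg0)).norm
  exact tendsto_atTop_mono hlower (hpow.atTop_mul_pos hcKpos hdiff)

/-- if `inf w > 1`, `‖χ_K‖ > 0` and `‖χ_{K∖D_k}‖ → 0`, then the norms of
`χ_{D_k} ∏_{s=1}^{n_k} w∘α⁻ˢ` tend to infinity. -/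
theorem stmt18 {X : Type*} [TopologicalSpace X] [MeasurableSpace X] [BorelSpace X]
    {F : Type*} [NormedAddCommGroup F] [NormedSpace ℂ F] [CompleteSpace F]
    (B : BanachFunctionSpace X F) (α : X ≃ X)
    (hmα : Measurable (⇑α)) (hmαs : Measurable (⇑α.symm))
    (hsolid : B.IsSolid) (hinv : B.IsInvariant α) (hind : B.HasCompactIndicators)
    (w : X → ℝ) (hw : IsWeightPair w)
    (hinf : 1 < ⨅ x, w x)
    (K : Set X) (hK : IsCompact K) (cK : F)
    (hcK : B.toFunL cK = Set.indicator K 1) (hcKpos : 0 < ‖cK‖)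
    (D : ℕ → Set X) (hD : ∀ k, MeasurableSet (D k)) (hDK : ∀ k, D k ⊆ K)
    (g : ℕ → F) (hg : ∀ k, B.toFunL (g k) = Set.indicator (K \ D k) 1)
    (hg0 : Tendsto (fun k => ‖g k‖) atTop (𝓝 0))
    (nk : ℕ → ℕ) (hnk : StrictMono nk) (hnkpos : ∀ k, 0 < nk k)
    (h : ℕ → F)
    (hh : ∀ k, B.toFunL (h k) = Set.indicator (D k)
      (fun x => ((∏ s ∈ Finset.Icc 1 (nk k), w ((⇑α.symm)^[s] x) : ℝ) : ℂ))) :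
    Tendsto (fun k => ‖h k‖) atTop atTop :=
  stmt18_general B α hsolid w hinf K cK hcK hcKpos D g hg hg0 nk hnk h hh
end

section
/- Let X be a topological space, let α : X → X be a bijection such that α and α⁻¹ are Borel measurable, let F be a solid, α-invariant Banach function space on X, and let w and 1/w both be weights on X. Let n ∈ ℕ and g ∈ F be such that the series Σ_{l=1}^∞ ‖T^{l·n}_{α,w} g‖_F and Σ_{l=1}^∞ ‖S^{l·n}_{α,w} g‖_F converge, where S_{α,w} := T_{α,w}⁻¹. Then the vector v := g + Σ_{l=1}^∞ T^{l·n}_{α,w} g + Σ_{l=1}^∞ S^{l·n}_{α,w} g is well defined in F and satisfies C^{(k·n)}_{α,w} v = v for every k ∈ ℕ, where C^{(m)}_{α,w} := (1/2)(T_{α,w}^m + S_{α,w}^m); in particular, v is a periodic element of the sequence (C^{(m)}_{α,w})_{m∈ℕ₀}. -/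
/-!
Writing `V` for the invertible operator `Tⁿ` (with inverse `Sⁿ`), the vector `v` is the sum of
the two-sided orbit `∑_{m ∈ ℤ} V^m g`. Applying `V^k` to this sum only reindexes it, so `v` is
fixed by `Tᵏⁿ = V^k` and by `Sᵏⁿ = V^(-k)`, hence by their mean `C^{(kn)}`.
-/

open Filter Topology

section TwoSidedOrbit

variable {R E : Type*} [Semiring R] [TopologicalSpace E]

theorem HasSum.zpow_units_apply_eq [AddCommMonoid E] [Module R E] [T2Space E]
    {V : (E →L[R] E)ˣ} {g v : E} (hv : HasSum (fun m : ℤ => (↑(V ^ m) : E →L[R] E) g) v)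
    (k : ℤ) : (↑(V ^ k) : E →L[R] E) v = v := by
  have hshift : HasSum (fun m : ℤ => (↑(V ^ (m + k)) : E →L[R] E) g) v :=
    (Equiv.addRight k).hasSum_iff.mpr hv
  refine ((↑(V ^ k) : E →L[R] E).hasSum hv).unique (hshift.congr_fun fun m => ?_)
  rw [add_comm, zpow_add, Units.val_mul]
  rfl

theorem HasSum.pow_units_apply_eq [AddCommMonoid E] [Module R E] [T2Space E]
    {V : (E →L[R] E)ˣ} {g v : E} (hv : HasSum (fun m : ℤ => (↑(V ^ m) : E →L[R] E) g) v)
    (k : ℕ) : ((↑V : E →L[R] E) ^ k) v = v ∧ ((↑(V⁻¹) : E →L[R] E) ^ k) v = v := by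
  have hpos := hv.zpow_units_apply_eq k
  have hneg := hv.zpow_units_apply_eq (-k)
  rw [zpow_natCast, Units.val_pow_eq_pow_val] at hpos
  rw [zpow_neg, ← inv_zpow, zpow_natCast, Units.val_pow_eq_pow_val] at hneg
  exact ⟨hpos, hneg⟩

theorem hasSum_zpow_units_apply [AddCommMonoid E] [Module R E] [ContinuousAdd E]
    {V : (E →L[R] E)ˣ} {g A B : E}
    (hA : HasSum (fun l : ℕ => ((↑V : E →L[R] E) ^ (l + 1)) g) A)
    (hB : HasSum (fun l : ℕ => ((↑(V⁻¹) : E →L[R] E) ^ (l + 1)) g) B) :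
    HasSum (fun m : ℤ => (↑(V ^ m) : E →L[R] E) g) (g + A + B) := by
  have hpos : HasSum (fun l : ℕ => (↑(V ^ ((l : ℤ) + 1)) : E →L[R] E) g) A :=
    hA.congr_fun fun l => by rw [← Nat.cast_succ, zpow_natCast, Units.val_pow_eq_pow_val]
  have hneg : HasSum (fun l : ℕ => (↑(V ^ (-((l : ℤ) + 1))) : E →L[R] E) g) B :=
    hB.congr_fun fun l => by
      rw [zpow_neg, ← inv_zpow, ← Nat.cast_succ, zpow_natCast, Units.val_pow_eq_pow_val]
  have hv := HasSum.of_add_one_of_neg_add_one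
    (f := fun m : ℤ => (↑(V ^ m) : E →L[R] E) g) hpos hneg
  rwa [zpow_zero, Units.val_one, one_apply_eq_self, add_comm A g] at hv

end TwoSidedOrbit

theorem cosOp_apply_eq_self {F : Type*} [NormedAddCommGroup F] [NormedSpace ℂ F]
    {T S : F →L[ℂ] F} {m : ℕ} {v : F} (hT : (T ^ m) v = v) (hS : (S ^ m) v = v) :
    cosOp T S m v = v := by
  rw [cosOp, smul_apply, add_apply, hT, hS, ← two_smul ℂ v,
    smul_smul, inv_mul_cancel₀ two_ne_zero, one_smul]

theorem stmt19_general
    {F : Type*} [NormedAddCommGroup F] [NormedSpace ℂ F] [CompleteSpace F]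
    (T : F →L[ℂ] F)
    (S : F →L[ℂ] F) (hST : ∀ f : F, S (T f) = f) (hTS : ∀ f : F, T (S f) = f)
    (n : ℕ) (hn : 0 < n) (g : F)
    (hsumT : Summable fun l : ℕ => ‖(T ^ ((l + 1) * n)) g‖)
    (hsumS : Summable fun l : ℕ => ‖(S ^ ((l + 1) * n)) g‖) :
    (∀ k : ℕ, 0 < k →
      cosOp T S (k * n)
        (g + (∑' l : ℕ, (T ^ ((l + 1) * n)) g) + ∑' l : ℕ, (S ^ ((l + 1) * n)) g) =
        g + (∑' l : ℕ, (T ^ ((l + 1) * n)) g) + ∑' l : ℕ, (S ^ ((l + 1) * n)) g) ∧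
    (g + (∑' l : ℕ, (T ^ ((l + 1) * n)) g) + ∑' l : ℕ, (S ^ ((l + 1) * n)) g) ∈
      periodicSet (cosOp T S) := by
  let U : (F →L[ℂ] F)ˣ := ⟨T, S, ContinuousLinearMap.ext hTS, ContinuousLinearMap.ext hST⟩
  have hpowT : ∀ m : ℕ, (↑(U ^ n) : F →L[ℂ] F) ^ m = T ^ (m * n) := fun m => by
    rw [Units.val_pow_eq_pow_val, ← pow_mul, mul_comm]
  have hpowS : ∀ m : ℕ, (↑((U ^ n)⁻¹) : F →L[ℂ] F) ^ m = S ^ (m * n) := fun m => by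
    rw [← inv_pow, Units.val_pow_eq_pow_val, ← pow_mul, mul_comm]; rfl
  have hv := hasSum_zpow_units_apply (V := U ^ n)
    (by simpa only [hpowT] using (Summable.of_norm hsumT).hasSum)
    (by simpa only [hpowS] using (Summable.of_norm hsumS).hasSum)
  have hfix : ∀ k : ℕ, cosOp T S (k * n) _ = _ := fun k =>
    cosOp_apply_eq_self (by rw [← hpowT]; exact (hv.pow_units_apply_eq k).1)
      (by rw [← hpowS]; exact (hv.pow_units_apply_eq k).2)
  exact ⟨fun k _ => hfix k, n, hn, fun k _ => hfix k⟩

/-- the vector `v = g + Σ_l T^{ln} g + Σ_l S^{ln} g` is a fixed point of the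
operators `C^{(kn)}`, hence a periodic element of the cosine operator sequence. -/
theorem stmt19 {X : Type*} [TopologicalSpace X] [MeasurableSpace X] [BorelSpace X]
    {F : Type*} [NormedAddCommGroup F] [NormedSpace ℂ F] [CompleteSpace F]
    (B : BanachFunctionSpace X F) (α : X ≃ X)
    (hmα : Measurable (⇑α)) (hmαs : Measurable (⇑α.symm))
    (hsolid : B.IsSolid) (hinv : B.IsInvariant α)
    (w : X → ℝ) (hw : IsWeightPair w) (T : F →L[ℂ] F)
    (hT : ∀ (f : F) (x : X), B.toFunL (T f) x = (w x : ℂ) * B.toFunL f (α x)) (S : F →L[ℂ] F) (hST : ∀ f : F, S (T f) = f) (hTS : ∀ f : F, T (S f) = f)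
    (n : ℕ) (hn : 0 < n) (g : F)
    (hsumT : Summable fun l : ℕ => ‖(T ^ ((l + 1) * n)) g‖)
    (hsumS : Summable fun l : ℕ => ‖(S ^ ((l + 1) * n)) g‖) :
    (∀ k : ℕ, 0 < k →
      cosOp T S (k * n)
        (g + (∑' l : ℕ, (T ^ ((l + 1) * n)) g) + ∑' l : ℕ, (S ^ ((l + 1) * n)) g) =
        g + (∑' l : ℕ, (T ^ ((l + 1) * n)) g) + ∑' l : ℕ, (S ^ ((l + 1) * n)) g) ∧
    (g + (∑' l : ℕ, (T ^ ((l + 1) * n)) g) + ∑' l : ℕ, (S ^ ((l + 1) * n)) g) ∈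
      periodicSet (cosOp T S) :=
  stmt19_general T S hST hTS n hn g hsumT hsumS
end
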